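/- If I(x,y) = a x + b y + c is an affine function, then the discrete weighted Gaussian curvature K^w = 2π − Σᵢ₌₁⁴ θᵢ computed from the four axis-neighbor differences equals 0. -/
import Mathlib


noncomputable def theta (h d d' : ℝ) : ℝ :=
  Real.arccos (d * d' / Real.sqrt ((h ^ 2 + d ^ 2) * (h ^ 2 + d' ^ 2)))

noncomputable def Kw (h d1 d2 d3 d4 : ℝ) : ℝ :=
  2 * Real.pi - (theta h d1 d2 + theta h d2 d3 + theta h d3 d4 + theta h d4 d1)

lemma theta_neg_neg (h d d' : ℝ) : theta h (-d) (-d') = theta h d d' := by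
  unfold theta; ring_nf

lemma theta_neg_right (h d d' : ℝ) :
    theta h d (-d') = Real.pi - theta h d d' := by
  unfold theta
  rw [show d * -d' = -(d * d') by ring, show (-d') ^ 2 = d' ^ 2 by ring, neg_div, Real.arccos_neg]

lemma theta_comm (h d d' : ℝ) : theta h d d' = theta h d' d := by
  unfold theta; rw [mul_comm d d', mul_comm (h ^ 2 + d ^ 2)]

/-- For an affine image `I(x,y) = a x + b y + c`, the discrete weighted
Gaussian curvature vanishes. -/
theorem Kw_affine_eq_zero (a b c x y h : ℝ) (hh : 0 < h)
    (I : ℝ → ℝ → ℝ) (hI : ∀ u v, I u v = a * u + b * v + c) :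
    Kw h (I x (y + h) - I x y) (I (x + h) y - I x y)
         (I x (y - h) - I x y) (I (x - h) y - I x y) = 0 := by
  have e1 : I x (y + h) - I x y = b * h := by simp [hI]; ring
  have e2 : I (x + h) y - I x y = a * h := by simp [hI]; ring
  have e3 : I x (y - h) - I x y = -(b * h) := by simp [hI]; ring
  have e4 : I (x - h) y - I x y = -(a * h) := by simp [hI]; ring
  rw [e1, e2, e3, e4]
  unfold Kw
  rw [theta_neg_neg, show theta h (a * h) (-(b * h)) = Real.pi - theta h (a * h) (b * h)
      from theta_neg_right .., show theta h (-(a * h)) (b * h) = Real.pi - theta h (b * h) (a * h)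
      by rw [theta_comm, theta_neg_right], theta_comm h (a * h) (b * h)]
  ring
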